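/- arXiv:1102.0198 — 2 statements merged into one kernel-verified Lean document; each statement's English description precedes it below -/
import Mathlib

section
/- Let k be an algebraically closed field of characteristic zero, Λ a finitely generated abelian group, and A a Λ-graded commutative integral domain which is a k-algebra with each nonzero homogeneous component A_λ one-dimensional over k and A_0 = k. Let Γ = {λ : A_λ ≠ 0} be the support monoid. Then A is isomorphic as a Λ-graded k-algebra to the monoid algebra k[Γ]. -/
/-!
Choose a nonzero `x γ ∈ A_γ` for each `γ ∈ Γ`. Since `A` is a domain and the components are
lines, `x γ * x δ = c(γ, δ) • x (γ + δ)` with `c(γ, δ) ∈ kˣ`, and it suffices to rescale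
the `x γ` so that `c = 1`. Inside the unit group of the fraction field of `A`, the subgroup `kˣ`
is divisible (`k` is algebraically closed), hence an injective `ℤ`-module, so it admits a
retraction `r`; replacing `x γ` by `r(x γ)⁻¹ • x γ` kills the cocycle. The rescaled elements form
a multiplicative family of nonzero homogeneous elements, which is a graded `k`-basis of `A`.
-/

open AddMonoidAlgebra Module

noncomputable instance IsAlgClosed.divisibleByAdditiveUnits (k : Type*) [Field k]
    [IsAlgClosed k] : DivisibleBy (Additive kˣ) ℤ :=
  haveI : DivisibleBy (Additive kˣ) ℕ := divisibleByOfSMulRightSurj _ _ fun {n} hn a => by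
    obtain ⟨z, hz⟩ := IsAlgClosed.exists_pow_nat_eq (a.toMul : k) (Nat.pos_of_ne_zero hn)
    have hz0 : z ≠ 0 := by
      rintro rfl
      exact a.toMul.ne_zero (by rw [← hz, zero_pow hn])
    exact ⟨Additive.ofMul (Units.mk0 z hz0), Units.ext hz⟩
  AddGroup.divisibleByIntOfDivisibleByNat _

theorem MonoidHom.exists_leftInverse_of_divisibleBy {G H : Type*} [CommGroup G] [CommGroup H]
    [DivisibleBy (Additive G) ℤ] (f : G →* H) (hf : Function.Injective f) :
    ∃ r : H →* G, ∀ g, r (f g) = g := by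
  obtain ⟨r, hr⟩ := (Module.Baer.of_divisible (Additive G)).extension_property_addMonoidHom
    (MonoidHom.toAdditive f) hf (AddMonoidHom.id _)
  exact ⟨MonoidHom.toAdditive.symm r, fun g => DFunLike.congr_fun hr (Additive.ofMul g)⟩

theorem exists_monoidHom_eq_units_smul {k A M : Type*} [Field k] [IsAlgClosed k] [CommRing A]
    [IsDomain A] [Algebra k A] [AddMonoid M] (x : M → A) (hx : ∀ m, x m ≠ 0)
    (hmul : ∀ m n, ∃ t : k, t • x (m + n) = x m * x n) :
    ∃ y : Multiplicative M →* A, ∀ m, ∃ s : kˣ, y (.ofAdd m) = (s : k) • x m := by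
  let F := FractionRing A
  let ι : A →+* F := algebraMap A F
  have hι : Function.Injective ι := IsFractionRing.injective A F
  let X (m : M) : Fˣ := Units.mk0 (ι (x m)) ((map_ne_zero_iff ι hι).mpr (hx m))
  let u : kˣ →* Fˣ := Units.map (ι.comp (algebraMap k A) : k →* F)
  have hu : Function.Injective u := fun a b h =>
    Units.ext ((ι.comp (algebraMap k A)).injective (congrArg Units.val h))
  obtain ⟨r, hr⟩ := u.exists_leftInverse_of_divisibleBy hu
  -- projection of `Fˣ` onto a complement of `kˣ`, so it sends the cocycle `c` to `1`
  let p : Fˣ →* Fˣ := (u.comp r)⁻¹ * MonoidHom.id _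
  have hp (a : kˣ) : p (u a) = 1 := by simp [p, hr]
  have hX (m n : M) : ∃ a : kˣ, X m * X n = u a * X (m + n) := by
    obtain ⟨t, ht⟩ := hmul m n
    have ht0 : t ≠ 0 := by
      rintro rfl
      exact mul_ne_zero (hx m) (hx n) (by rw [← ht, zero_smul])
    refine ⟨Units.mk0 t ht0, Units.ext ?_⟩
    change ι (x m) * ι (x n) = ι (algebraMap k A t) * ι (x (m + n))
    rw [← map_mul, ← map_mul, ← Algebra.smul_def, ht]
  let y (m : M) : A := (((r (X m))⁻¹ : kˣ) : k) • x m
  have hιy (m : M) : ι (y m) = p (X m) := by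
    simpa [y, p, u, X, Algebra.smul_def] using .inl (map_inv₀ (ι.comp (algebraMap k A)) _)
  have hy (m n : M) : y m * y n = y (m + n) := by
    obtain ⟨a, ha⟩ := hX m n
    apply hι
    rw [map_mul, hιy, hιy, hιy, ← Units.val_mul, ← map_mul, ha, map_mul, hp, one_mul]
  have hy0 : y 0 = 1 := by
    apply hι
    rw [hιy, map_one, Units.val_eq_one, ← mul_eq_right (b := p (X 0)), ← map_mul]
    obtain ⟨a, ha⟩ := hX 0 0
    rw [ha, map_mul, hp, one_mul, add_zero]
  exact ⟨{ toFun := fun m => y m.toAdd, map_one' := hy0, map_mul' := fun _ _ => (hy _ _).symm },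
    fun m => ⟨_, rfl⟩⟩

theorem Submodule.exists_smul_eq_of_finrank_eq_one {K V : Type*} [DivisionRing K]
    [AddCommGroup V] [Module K V] {p : Submodule K V} (h : finrank K p = 1) {x a : V}
    (hx : x ∈ p) (hx0 : x ≠ 0) (ha : a ∈ p) : ∃ t : K, t • x = a := by
  obtain ⟨t, ht⟩ :=
    (finrank_eq_one_iff_of_nonzero' (⟨x, hx⟩ : p) (by simpa using hx0)).mp h ⟨a, ha⟩
  exact ⟨t, congrArg Subtype.val ht⟩

section Graded

variable {k A Λ : Type*} [Field k] [CommRing A] [Algebra k A] [AddCommMonoid Λ]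
  {𝒜 : Λ → Submodule k A} {Γ : AddSubmonoid Λ} {y : Multiplicative Γ →* A}

theorem exists_mem_gradeBy_lift_eq (hmem : ∀ γ : Γ, y (.ofAdd γ) ∈ 𝒜 γ)
    (hne : ∀ γ : Γ, y (.ofAdd γ) ≠ 0) (hdim : ∀ lam, 𝒜 lam = ⊥ ∨ finrank k (𝒜 lam) = 1)
    (hΓ : ∀ lam, 𝒜 lam ≠ ⊥ → lam ∈ Γ) {lam : Λ} {a : A} (ha : a ∈ 𝒜 lam) :
    ∃ p ∈ gradeBy k (fun γ : Γ => (γ : Λ)) lam, lift k A Γ y p = a := by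
  by_cases hbot : 𝒜 lam = ⊥
  · rw [hbot, Submodule.mem_bot] at ha
    exact ⟨0, zero_mem _, by rw [map_zero, ha]⟩
  · let γ : Γ := ⟨lam, hΓ lam hbot⟩
    obtain ⟨t, ht⟩ := Submodule.exists_smul_eq_of_finrank_eq_one ((hdim lam).resolve_left hbot)
      (hmem γ) (hne γ) ha
    exact ⟨single γ t, single_mem_gradeBy _ γ t, by rw [lift_single, ht]⟩

variable [DecidableEq Λ] [GradedAlgebra 𝒜]

theorem injective_lift_of_mem_of_ne_zero (hmem : ∀ γ : Γ, y (.ofAdd γ) ∈ 𝒜 γ)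
    (hne : ∀ γ : Γ, y (.ofAdd γ) ≠ 0) : Function.Injective (lift k A Γ y) := by
  have hind : LinearIndependent k fun γ : Γ => y (.ofAdd γ) :=
    ((DirectSum.Decomposition.isInternal 𝒜).submodule_iSupIndep.comp
      Subtype.val_injective).linearIndependent _ hmem hne
  intro p q hpq
  simp only [lift_apply, ← Finsupp.linearCombination_apply] at hpq
  exact coeff_injective (hind hpq)

theorem surjective_lift_of_mem_of_ne_zero (hmem : ∀ γ : Γ, y (.ofAdd γ) ∈ 𝒜 γ)
    (hne : ∀ γ : Γ, y (.ofAdd γ) ≠ 0) (hdim : ∀ lam, 𝒜 lam = ⊥ ∨ finrank k (𝒜 lam) = 1)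
    (hΓ : ∀ lam, 𝒜 lam ≠ ⊥ → lam ∈ Γ) : Function.Surjective (lift k A Γ y) := by
  have hrange : ⊤ ≤ LinearMap.range (lift k A Γ y).toLinearMap := by
    rw [← (DirectSum.Decomposition.isInternal 𝒜).submodule_iSup_eq_top]
    refine iSup_le fun lam a ha => ?_
    obtain ⟨p, -, hp⟩ := exists_mem_gradeBy_lift_eq hmem hne hdim hΓ ha
    exact ⟨p, hp⟩
  exact fun a => hrange (Submodule.mem_top (x := a))

end Graded

theorem stmt1_general {k A Λ : Type*} [Field k] [IsAlgClosed k]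
    [AddCommGroup Λ] [DecidableEq Λ]
    [CommRing A] [IsDomain A] [Algebra k A]
    (𝒜 : Λ → Submodule k A) [GradedAlgebra 𝒜]
    (hdim : ∀ lam, 𝒜 lam = ⊥ ∨ Module.finrank k (𝒜 lam) = 1)
    (Γ : AddSubmonoid Λ) (hΓ : ∀ lam, lam ∈ Γ ↔ 𝒜 lam ≠ ⊥) :
    ∃ e : A ≃ₐ[k] AddMonoidAlgebra k Γ,
      ∀ lam : Λ, Submodule.map e.toLinearMap (𝒜 lam)
        ≤ AddMonoidAlgebra.gradeBy k (fun γ : Γ => (γ : Λ)) lam := by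
  choose x hxmem hxne using fun γ : Γ => (Submodule.ne_bot_iff _).mp ((hΓ γ).mp γ.2)
  have hline (γ : Γ) : finrank k (𝒜 γ) = 1 := (hdim γ).resolve_left ((hΓ γ).mp γ.2)
  obtain ⟨y, hy⟩ := exists_monoidHom_eq_units_smul x hxne fun γ δ =>
    Submodule.exists_smul_eq_of_finrank_eq_one (hline (γ + δ)) (hxmem _) (hxne _)
      (SetLike.mul_mem_graded (hxmem γ) (hxmem δ))
  have hymem (γ : Γ) : y (.ofAdd γ) ∈ 𝒜 γ := by
    obtain ⟨s, hs⟩ := hy γ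
    exact hs ▸ Submodule.smul_mem _ _ (hxmem γ)
  have hyne (γ : Γ) : y (.ofAdd γ) ≠ 0 := by
    obtain ⟨s, hs⟩ := hy γ
    exact hs ▸ smul_ne_zero s.ne_zero (hxne γ)
  have hΓ' (lam : Λ) : 𝒜 lam ≠ ⊥ → lam ∈ Γ := (hΓ lam).mpr
  let E := AlgEquiv.ofBijective (lift k A Γ y)
    ⟨injective_lift_of_mem_of_ne_zero hymem hyne,
      surjective_lift_of_mem_of_ne_zero hymem hyne hdim hΓ'⟩
  refine ⟨E.symm, fun lam => Submodule.map_le_iff_le_comap.mpr fun a ha => ?_⟩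
  obtain ⟨p, hp, rfl⟩ := exists_mem_gradeBy_lift_eq hymem hyne hdim hΓ' ha
  change E.symm (E p) ∈ gradeBy k (fun γ : Γ => (γ : Λ)) lam
  rwa [E.symm_apply_apply]

/-- A `Λ`-graded integral domain over an algebraically closed field `k` of characteristic zero,
with one-dimensional nonzero homogeneous components and `A₀ = k`, is isomorphic as a graded
`k`-algebra to the monoid algebra `k[Γ]` of its support monoid `Γ`. -/
theorem stmt1 {k A Λ : Type*} [Field k] [IsAlgClosed k] [CharZero k]
    [AddCommGroup Λ] [DecidableEq Λ] [AddGroup.FG Λ]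
    [CommRing A] [IsDomain A] [Algebra k A]
    (𝒜 : Λ → Submodule k A) [GradedAlgebra 𝒜]
    (hdim : ∀ lam, 𝒜 lam = ⊥ ∨ Module.finrank k (𝒜 lam) = 1)
    (hzero : 𝒜 0 = Submodule.span k {1})
    (Γ : AddSubmonoid Λ) (hΓ : ∀ lam, lam ∈ Γ ↔ 𝒜 lam ≠ ⊥) :
    ∃ e : A ≃ₐ[k] AddMonoidAlgebra k Γ,
      ∀ lam : Λ, Submodule.map e.toLinearMap (𝒜 lam)
        ≤ AddMonoidAlgebra.gradeBy k (fun γ : Γ => (γ : Λ)) lam :=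
  stmt1_general 𝒜 hdim Γ hΓ
end

section
/- Let R → S be an injective homomorphism of commutative rings and M a finitely presented R-module. Then the natural base-change map Hom_R(M, R) → Hom_S(M ⊗_R S, S) is injective. -/
open scoped TensorProduct

theorem LinearMap.rid_comp_baseChange_one_tmul {R S M : Type*} [CommRing R] [CommRing S]
    [Algebra R S] [AddCommMonoid M] [Module R M] (f : M →ₗ[R] R) (m : M) :
    ((TensorProduct.AlgebraTensorModule.rid R S S).toLinearMap ∘ₗ f.baseChange S)
      ((1 : S) ⊗ₜ[R] m) = algebraMap R S (f m) := by
  simp [Algebra.algebraMap_eq_smul_one]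

theorem stmt3_general {R S M : Type*} [CommRing R] [CommRing S] [Algebra R S]
    (hinj : Function.Injective (algebraMap R S))
    [AddCommGroup M] [Module R M] :
    Function.Injective (fun f : M →ₗ[R] R =>
      (TensorProduct.AlgebraTensorModule.rid R S S).toLinearMap ∘ₗ f.baseChange S) := by
  intro f g hfg
  ext m
  apply hinj
  rw [← f.rid_comp_baseChange_one_tmul, ← g.rid_comp_baseChange_one_tmul]
  exact LinearMap.congr_fun hfg _

/-- For an injective ring map `R → S` and a finitely presented `R`-module `M`, the natural
base-change map `Hom_R(M, R) → Hom_S(M ⊗_R S, S)` is injective. -/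
theorem stmt3 {R S M : Type*} [CommRing R] [CommRing S] [Algebra R S]
    (hinj : Function.Injective (algebraMap R S))
    [AddCommGroup M] [Module R M] [Module.FinitePresentation R M] :
    Function.Injective (fun f : M →ₗ[R] R =>
      (TensorProduct.AlgebraTensorModule.rid R S S).toLinearMap ∘ₗ f.baseChange S) :=
  stmt3_general hinj
end
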